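/- If A and B are closed under stuttering, then ◇(↑A ∧ B) is closed under stuttering, where ↑A := ¬A ∧ ○A. -/

import Mathlib

def State := String → Bool

def StSeq := ℕ → State

def drop (k : ℕ) (s : StSeq) : StSeq := fun n => s (k + n)

def stutter (s : StSeq) (i : ℕ) : StSeq := fun n => if n ≤ i then s n else s (n - 1)

def CUS (F : StSeq → Prop) : Prop := ∀ (s : StSeq) (i : ℕ), F s ↔ F (stutter s i)

def Var (a : String) : StSeq → Prop := fun s => s 0 a = true

def Not' (F : StSeq → Prop) : StSeq → Prop := fun s => ¬ F s

def And' (F G : StSeq → Prop) : StSeq → Prop := fun s => F s ∧ G s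

def Or' (F G : StSeq → Prop) : StSeq → Prop := fun s => F s ∨ G s

def Imp' (F G : StSeq → Prop) : StSeq → Prop := fun s => F s → G s

def Iff' (F G : StSeq → Prop) : StSeq → Prop := fun s => F s ↔ G s

def Next (F : StSeq → Prop) : StSeq → Prop := fun s => F (drop 1 s)

def Always (F : StSeq → Prop) : StSeq → Prop := fun s => ∀ k, F (drop k s)

def Ev (F : StSeq → Prop) : StSeq → Prop := fun s => ∃ k, F (drop k s)

def Until' (F G : StSeq → Prop) : StSeq → Prop :=
  fun s => ∃ k, G (drop k s) ∧ ∀ j < k, F (drop j s)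

def Up (F : StSeq → Prop) : StSeq → Prop := And' (Not' F) (Next F)

def Down (F : StSeq → Prop) : StSeq → Prop := And' F (Next (Not' F))

def AnyEdge (F : StSeq → Prop) : StSeq → Prop := Or' (Up F) (Down F)

/-! Stuttering at `i` turns the sequence `s` into `s ∘ unstutter i`. A stuttering-invariant
formula therefore holds at position `k` of `stutter s i` iff it holds at position
`unstutter i k` of `s`. The edge `↑A` at `k` reads positions `k` and `k + 1`; under `unstutter i`
these stay adjacent except at `k = i`, where both collapse to `i`, and there `¬A ∧ A` is
impossible. So the edges of `A` at which `B` holds correspond, shifted by one past `i`. -/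

def unstutter (i k : ℕ) : ℕ := if k ≤ i then k else k - 1

theorem drop_drop (a b : ℕ) (s : StSeq) : drop a (drop b s) = drop (b + a) s := by
  funext n
  exact congrArg s (Nat.add_assoc b a n).symm

theorem drop_stutter_of_le {k i : ℕ} (s : StSeq) (h : k ≤ i) :
    drop k (stutter s i) = stutter (drop k s) (i - k) := by
  funext n
  simp only [drop, stutter]
  split_ifs <;> first | omega | exact congrArg s (by omega)

theorem drop_stutter_of_lt {k i : ℕ} (s : StSeq) (h : i < k) :
    drop k (stutter s i) = drop (k - 1) s := by
  funext n
  simp only [drop, stutter, if_neg (show ¬k + n ≤ i by omega)]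
  exact congrArg s (by omega)

theorem CUS.drop_stutter_iff {F : StSeq → Prop} (hF : CUS F) (s : StSeq) (i k : ℕ) :
    F (drop k (stutter s i)) ↔ F (drop (unstutter i k) s) := by
  unfold unstutter
  split_ifs with hk
  · rw [drop_stutter_of_le s hk, ← hF]
  · rw [drop_stutter_of_lt s (not_le.mp hk)]

theorem ev_and_up_iff (F G : StSeq → Prop) (s : StSeq) :
    Ev (And' (Up F) G) s ↔ ∃ k, (¬F (drop k s) ∧ G (drop k s)) ∧ F (drop (k + 1) s) := by
  simp only [Ev, And', Up, Not', Next, drop_drop]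
  tauto

theorem exists_edge_iff_unstutter {P Q : ℕ → Prop} (hPQ : ∀ j, P j → ¬Q j) (i : ℕ) :
    (∃ k, P k ∧ Q (k + 1)) ↔ ∃ k, P (unstutter i k) ∧ Q (unstutter i (k + 1)) := by
  unfold unstutter
  constructor
  · rintro ⟨k, hP, hQ⟩
    rcases lt_or_ge k i with hk | hk
    · exact ⟨k, by simpa [hk.le] using hP, by simpa [Nat.succ_le_of_lt hk] using hQ⟩
    · refine ⟨k + 1, ?_, ?_⟩
      · simpa [show ¬k + 1 ≤ i by omega] using hP
      · simpa [show ¬k + 1 + 1 ≤ i by omega] using hQ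
  · rintro ⟨k, hP, hQ⟩
    rcases lt_trichotomy k i with hk | rfl | hk
    · exact ⟨k, by simpa [hk.le] using hP, by simpa [Nat.succ_le_of_lt hk] using hQ⟩
    · simp only [le_refl, if_true, show ¬k + 1 ≤ k by omega, if_false, Nat.add_sub_cancel] at hP hQ
      exact absurd hQ (hPQ k hP)
    · refine ⟨k - 1, ?_, ?_⟩
      · simpa [show ¬k ≤ i by omega] using hP
      · simpa [show ¬k + 1 ≤ i by omega, show k - 1 + 1 = k by omega] using hQ

theorem prop1_simple1 (A B : StSeq → Prop) (hA : CUS A) (hB : CUS B) :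
    CUS (Ev (And' (Up A) B)) := by
  intro s i
  rw [ev_and_up_iff, ev_and_up_iff]
  simp only [hA.drop_stutter_iff, hB.drop_stutter_iff]
  exact exists_edge_iff_unstutter (P := fun j => ¬A (drop j s) ∧ B (drop j s))
    (Q := fun j => A (drop j s)) (fun _ h => h.1) i
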